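/- With Ψ as above, Ψ commutes with the degeneracies: Ψ(sʲφ)(x⁰,…,x^{n-1}) agrees with inserting the unit 1⊗1 of A⋊H in position j+1, where sʲφ(h,a⁰,…,a^{n-1}) = φ(h, a⁰,…,aʲ, 1, aʲ⁺¹,…,a^{n-1}) for 0 ≤ j ≤ n−1. -/
import Mathlib


noncomputable section

open TensorProduct

variable {H A : Type} [Ring H] [HopfAlgebra ℂ H] [Ring A] [Algebra ℂ A]

/-- `sweedler N Δ₁ Δ₂ k g F` is the Sweedler sum `Σ F (g₍₁₎, …, g₍ₖ₊₁₎)`, computed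
from a chosen finite representation `comul g = Σ_{i < N g} Δ₁ g i ⊗ Δ₂ g i` of the
comultiplication. -/
def sweedler (N : H → ℕ) (Δ₁ Δ₂ : H → ℕ → H) :
    (k : ℕ) → H → ((Fin (k+1) → H) → ℂ) → ℂ
  | 0, g, F => F ![g]
  | k+1, g, F => ∑ i ∈ Finset.range (N g),
      sweedler N Δ₁ Δ₂ k (Δ₂ g i) (fun v => F (Fin.cons (Δ₁ g i) v))

/-- The multiplication of the crossed product `A ⋊ H`, as a linear map on
`(A ⊗ H) ⊗ (A ⊗ H)`; on pure tensors it is `(a ⊗ h)(b ⊗ g) = a h₍₁₎(b) ⊗ h₍₂₎ g`. -/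
def cpMul (ρ : H →ₗ[ℂ] A →ₗ[ℂ] A) :
    (A ⊗[ℂ] H) ⊗[ℂ] (A ⊗[ℂ] H) →ₗ[ℂ] A ⊗[ℂ] H :=
  (LinearMap.rTensor H (LinearMap.mul' ℂ A)) ∘ₗ
  (TensorProduct.assoc ℂ A A H).symm.toLinearMap ∘ₗ
  (LinearMap.lTensor A (TensorProduct.map (TensorProduct.lift ρ) (LinearMap.mul' ℂ H))) ∘ₗ
  (LinearMap.lTensor A (TensorProduct.tensorTensorTensorComm ℂ H H A H).toLinearMap) ∘ₗ
  (LinearMap.lTensor A (LinearMap.rTensor (A ⊗[ℂ] H) (Coalgebra.comul (R := ℂ)))) ∘ₗ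
  (TensorProduct.assoc ℂ A H (A ⊗[ℂ] H)).toLinearMap

/-- The tuple obtained from `x` by replacing the pair `(xʲ, xʲ⁺¹)` by the single
entry `y` (used with `y = xʲ xʲ⁺¹` for the `j`-th face map). -/
def faceTup {α : Type} {n : ℕ} (j : Fin (n+1)) (y : α) (x : Fin (n+2) → α) :
    Fin (n+1) → α :=
  fun k => if (k : ℕ) < (j : ℕ) then x k.castSucc else if k = j then y else x k.succ

/-- The `i`-th term of the product `(p.1 ⊗ p.2)(q.1 ⊗ q.2)` in `A ⋊ H`, for the chosen
representation of the comultiplication: `p.1 · (Δ₁ p.2 i)(q.1) ⊗ (Δ₂ p.2 i) q.2`. -/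
def cpPairTerm (Δ₁ Δ₂ : H → ℕ → H) (ρ : H →ₗ[ℂ] A →ₗ[ℂ] A) (p q : A × H) (i : ℕ) :
    A × H :=
  (p.1 * ρ (Δ₁ p.2 i) q.1, Δ₂ p.2 i * q.2)

/-- The Hochschild coboundary of a cochain on the crossed product `A ⋊ H`. -/
def cpb (ρ : H →ₗ[ℂ] A →ₗ[ℂ] A) {n : ℕ} (f : (Fin (n+1) → A ⊗[ℂ] H) → ℂ) :
    (Fin (n+2) → A ⊗[ℂ] H) → ℂ := fun x =>
  (∑ j : Fin (n+1), (-1 : ℂ) ^ (j : ℕ) *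
      f (faceTup j (cpMul ρ (x j.castSucc ⊗ₜ[ℂ] x j.succ)) x))
  + (-1 : ℂ) ^ (n+1) *
      f (fun k => if (k : ℕ) = 0 then cpMul ρ (x (Fin.last (n+1)) ⊗ₜ[ℂ] x 0)
                  else x k.castSucc)

/-- `f` vanishes whenever some argument in position `≥ 1` lies in the subalgebra
`1 ⊗ H` of `A ⋊ H`. -/
def HConstVanish {m : ℕ} (f : (Fin m → A ⊗[ℂ] H) → ℂ) : Prop :=
  ∀ x : Fin m → A ⊗[ℂ] H,
    (∃ j : Fin m, 0 < (j : ℕ) ∧ ∃ h : H, x j = (1 : A) ⊗ₜ[ℂ] h) → f x = 0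

/-- An `H`-constant cochain on `A ⋊ H`: both `f` and `bf` vanish whenever some
argument in position `≥ 1` lies in `1 ⊗ H`. -/
def IsHConstant (ρ : H →ₗ[ℂ] A →ₗ[ℂ] A) {n : ℕ}
    (f : MultilinearMap ℂ (fun _ : Fin (n+1) => A ⊗[ℂ] H) ℂ) : Prop :=
  HConstVanish ⇑f ∧ HConstVanish (cpb ρ ⇑f)

/-- Auxiliary recursion for `Ψ`: processes the pairs `x¹, …, xᵏ`, keeping an
accumulated Hopf algebra element `g`; at each step `Δg = g₍₁₎ ⊗ g₍₂₎` is split, the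
current slot becomes `g₍₁₎(aʲ)` and the accumulator becomes `g₍₂₎ hʲ`. -/
def psiAux (N : H → ℕ) (Δ₁ Δ₂ : H → ℕ → H) (ρ : H →ₗ[ℂ] A →ₗ[ℂ] A) :
    (k : ℕ) → H → (Fin k → A × H) → (H → (Fin k → A) → ℂ) → ℂ
  | 0, g, _, F => F g ![]
  | k+1, g, x, F => ∑ i ∈ Finset.range (N g),
      psiAux N Δ₁ Δ₂ ρ k (Δ₂ g i * (x 0).2) (fun j => x j.succ)
        (fun h v => F h (Fin.cons (ρ (Δ₁ g i) (x 0).1) v))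

/-- The value of `Ψφ` on the elementary tensors `a⁰ ⊗ h⁰, …, aⁿ ⊗ hⁿ`:
`Ψ(φ)(a⁰⊗h⁰, …, aⁿ⊗hⁿ) = φ(h⁰₍ₙ₊₁₎ ⋯ h^{n-1}₍₂₎ hⁿ, a⁰, h⁰₍₁₎(a¹), …,
h⁰₍ₙ₎⋯h^{n-1}₍₁₎(aⁿ))`. -/
def psiV (N : H → ℕ) (Δ₁ Δ₂ : H → ℕ → H) (ρ : H →ₗ[ℂ] A →ₗ[ℂ] A) {n : ℕ}
    (φf : H → (Fin (n+1) → A) → ℂ) (x : Fin (n+1) → A × H) : ℂ :=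
  psiAux N Δ₁ Δ₂ ρ n ((x 0).2) (fun j => x j.succ)
    (fun h v => φf h (Fin.cons (x 0).1 v))

/-- The equivariance condition `φ(S(g₍₂₎) h g₍₁₎, a⁰, …, aⁿ) =
φ(h, g₍₁₎(a⁰), …, g₍ₙ₊₁₎(aⁿ))` for a cochain `φ : H ⊗ A^{⊗(n+1)} → ℂ`. -/
def IsEquivariant (N : H → ℕ) (Δ₁ Δ₂ : H → ℕ → H) (ρ : H →ₗ[ℂ] A →ₗ[ℂ] A) {n : ℕ}
    (φf : H → (Fin (n+1) → A) → ℂ) : Prop :=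
  ∀ (g h : H) (a : Fin (n+1) → A),
    sweedler N Δ₁ Δ₂ 1 g
      (fun ℓ => φf (HopfAlgebra.antipode (R := ℂ) (ℓ 1) * h * ℓ 0) a)
      = sweedler N Δ₁ Δ₂ n g (fun ℓ => φf h (fun j => ρ (ℓ j) (a j)))

/-- The cyclic operator on equivariant cochains:
`t φ(h, a⁰, …, aⁿ) = φ(h₍₂₎, S⁻¹(h₍₁₎)(aⁿ), a⁰, …, aⁿ⁻¹)`. -/
def cycOpEq (N : H → ℕ) (Δ₁ Δ₂ : H → ℕ → H) (ρ : H →ₗ[ℂ] A →ₗ[ℂ] A)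
    (Sinv : H →ₗ[ℂ] H) {n : ℕ} (φf : H → (Fin (n+1) → A) → ℂ) :
    H → (Fin (n+1) → A) → ℂ := fun h a =>
  sweedler N Δ₁ Δ₂ 1 h (fun ℓ =>
    φf (ℓ 1) (Fin.cons (ρ (Sinv (ℓ 0)) (a (Fin.last n))) (fun j : Fin n => a j.castSucc)))

/-- The map `Φ`: `(Φf)(h, a⁰, …, aⁿ) = f(a⁰ ⊗ 1, …, aⁿ⁻¹ ⊗ 1, aⁿ ⊗ h)`. -/
def phiV {n : ℕ} (f : MultilinearMap ℂ (fun _ : Fin (n+1) => A ⊗[ℂ] H) ℂ) :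
    H → (Fin (n+1) → A) → ℂ := fun h a =>
  f (fun i => if i = Fin.last n then a i ⊗ₜ[ℂ] h else a i ⊗ₜ[ℂ] (1 : H))


section Aux

variable {H A : Type} [Ring H] [HopfAlgebra ℂ H] [Ring A] [Algebra ℂ A]

private lemma insertNth_succ_eq {α : Type} {k : ℕ} (j : Fin (k+1)) (z : α)
    (x : Fin (k+1) → α) :
    Fin.insertNth (α := fun _ => α) j.succ z x
      = Fin.cons (x 0) (Fin.insertNth (α := fun _ => α) j z (Fin.tail x)) := by
  funext i
  induction i using Fin.cases with
  | zero =>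
    have h0 : Fin.insertNth (α := fun _ => α) j.succ z x (j.succ.succAbove 0) = x 0 :=
      Fin.insertNth_apply_succAbove (α := fun _ => α) j.succ z x 0
    rw [Fin.succ_succAbove_zero] at h0
    simpa using h0
  | succ i =>
    rw [Fin.cons_succ]
    by_cases h : i = j
    · subst h
      simp [Fin.insertNth_apply_same]
    · obtain ⟨l, rfl⟩ := Fin.exists_succAbove_eq h
      have h1 : Fin.insertNth (α := fun _ => α) j.succ z x ((j.succAbove l).succ)
          = x l.succ := by
        rw [← Fin.succ_succAbove_succ]
        exact Fin.insertNth_apply_succAbove (α := fun _ => α) j.succ z x l.succ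
      rw [h1, Fin.insertNth_apply_succAbove]
      rfl

private def evalNil : MultilinearMap ℂ (fun _ : Fin 0 => A) ℂ →ₗ[ℂ] ℂ where
  toFun f := f ![]
  map_add' f g := rfl
  map_smul' c f := rfl

private def curryAtL {k : ℕ} :
    A →ₗ[ℂ] (MultilinearMap ℂ (fun _ : Fin (k+1) => A) ℂ →ₗ[ℂ]
      MultilinearMap ℂ (fun _ : Fin k => A) ℂ) where
  toFun c :=
    { toFun := fun f => f.curryLeft c
      map_add' := fun f g => by
        ext v
        simp [MultilinearMap.curryLeft_apply]
      map_smul' := fun r f => by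
        ext v
        simp [MultilinearMap.curryLeft_apply] }
  map_add' c c' := LinearMap.ext fun f => map_add f.curryLeft c c'
  map_smul' r c := LinearMap.ext fun f => map_smul f.curryLeft r c

private def psiAuxB (ρ : H →ₗ[ℂ] A →ₗ[ℂ] A) {k : ℕ} (a : A) (t : H)
    (P : (H →ₗ[ℂ] MultilinearMap ℂ (fun _ : Fin k => A) ℂ) →ₗ[ℂ] (H →ₗ[ℂ] ℂ))
    (F : H →ₗ[ℂ] MultilinearMap ℂ (fun _ : Fin (k+1) => A) ℂ) :
    H →ₗ[ℂ] H →ₗ[ℂ] ℂ :=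
  LinearMap.mk₂ ℂ (fun h₁ h₂ => P (curryAtL (ρ h₁ a) ∘ₗ F) (h₂ * t))
    (fun h₁ h₁' h₂ => by
      simp [map_add, LinearMap.add_comp, LinearMap.add_apply])
    (fun c h₁ h₂ => by
      simp [map_smul, LinearMap.smul_comp, LinearMap.smul_apply])
    (fun h₁ h₂ h₂' => by simp [add_mul])
    (fun c h₁ h₂ => by simp [smul_mul_assoc])

private lemma psiAuxB_add (ρ : H →ₗ[ℂ] A →ₗ[ℂ] A) {k : ℕ} (a : A) (t : H)
    (P : (H →ₗ[ℂ] MultilinearMap ℂ (fun _ : Fin k => A) ℂ) →ₗ[ℂ] (H →ₗ[ℂ] ℂ))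
    (F F' : H →ₗ[ℂ] MultilinearMap ℂ (fun _ : Fin (k+1) => A) ℂ) :
    psiAuxB ρ a t P (F + F') = psiAuxB ρ a t P F + psiAuxB ρ a t P F' := by
  ext h₁ h₂
  simp [psiAuxB, LinearMap.comp_add, map_add]

private lemma psiAuxB_smul (ρ : H →ₗ[ℂ] A →ₗ[ℂ] A) {k : ℕ} (a : A) (t : H)
    (P : (H →ₗ[ℂ] MultilinearMap ℂ (fun _ : Fin k => A) ℂ) →ₗ[ℂ] (H →ₗ[ℂ] ℂ))
    (r : ℂ) (F : H →ₗ[ℂ] MultilinearMap ℂ (fun _ : Fin (k+1) => A) ℂ) :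
    psiAuxB ρ a t P (r • F) = r • psiAuxB ρ a t P F := by
  ext h₁ h₂
  simp [psiAuxB, LinearMap.comp_smul, map_smul]

private lemma lift_add_apply (B B' : H →ₗ[ℂ] H →ₗ[ℂ] ℂ) (z : H ⊗[ℂ] H) :
    TensorProduct.lift (B + B') z = TensorProduct.lift B z + TensorProduct.lift B' z := by
  induction z using TensorProduct.induction_on with
  | zero => simp
  | tmul a b => simp [TensorProduct.lift.tmul]
  | add u v hu hv =>
    simp only [map_add, hu, hv]
    ring

private lemma lift_smul_apply (r : ℂ) (B : H →ₗ[ℂ] H →ₗ[ℂ] ℂ) (z : H ⊗[ℂ] H) :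
    TensorProduct.lift (r • B) z = r • TensorProduct.lift B z := by
  induction z using TensorProduct.induction_on with
  | zero => simp
  | tmul a b => simp [TensorProduct.lift.tmul]
  | add u v hu hv =>
    simp only [map_add, hu, hv, smul_add]

private def psiAuxLin (ρ : H →ₗ[ℂ] A →ₗ[ℂ] A) :
    (k : ℕ) → (Fin k → A × H) →
      ((H →ₗ[ℂ] MultilinearMap ℂ (fun _ : Fin k => A) ℂ) →ₗ[ℂ] (H →ₗ[ℂ] ℂ))
  | 0, _ => LinearMap.llcomp ℂ H _ ℂ evalNil
  | k+1, x =>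
    { toFun := fun F =>
        (TensorProduct.lift (psiAuxB ρ (x 0).1 (x 0).2
            (psiAuxLin ρ k (fun l => x l.succ)) F)) ∘ₗ
          (Coalgebra.comul (R := ℂ))
      map_add' := fun F F' => by
        refine LinearMap.ext fun g => ?_
        simp only [LinearMap.comp_apply, LinearMap.add_apply]
        rw [psiAuxB_add, lift_add_apply]
      map_smul' := fun r F => by
        refine LinearMap.ext fun g => ?_
        simp only [LinearMap.comp_apply, LinearMap.smul_apply, RingHom.id_apply]
        rw [psiAuxB_smul, lift_smul_apply] }

end Aux
section Aux2

variable {H A : Type} [Ring H] [HopfAlgebra ℂ H] [Ring A] [Algebra ℂ A]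

private lemma psiAux_succ (N : H → ℕ) (Δ₁ Δ₂ : H → ℕ → H) (ρ : H →ₗ[ℂ] A →ₗ[ℂ] A)
    {k : ℕ} (g : H) (x : Fin (k+1) → A × H) (F : H → (Fin (k+1) → A) → ℂ) :
    psiAux N Δ₁ Δ₂ ρ (k+1) g x F = ∑ i ∈ Finset.range (N g),
      psiAux N Δ₁ Δ₂ ρ k (Δ₂ g i * (x 0).2) (fun l => x l.succ)
        (fun h v => F h (Fin.cons (ρ (Δ₁ g i) (x 0).1) v)) := rfl

private lemma psiAux_congr (N : H → ℕ) (Δ₁ Δ₂ : H → ℕ → H) (ρ : H →ₗ[ℂ] A →ₗ[ℂ] A)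
    {k : ℕ} (g : H) (x : Fin k → A × H) {F G : H → (Fin k → A) → ℂ}
    (hFG : ∀ a v, F a v = G a v) :
    psiAux N Δ₁ Δ₂ ρ k g x F = psiAux N Δ₁ Δ₂ ρ k g x G := by
  rw [show F = G from funext fun a => funext fun v => hFG a v]

private lemma psiAux_smul (N : H → ℕ) (Δ₁ Δ₂ : H → ℕ → H) (ρ : H →ₗ[ℂ] A →ₗ[ℂ] A) :
    ∀ (k : ℕ) (g : H) (x : Fin k → A × H) (G : H → (Fin k → A) → ℂ) (c : ℂ),
      psiAux N Δ₁ Δ₂ ρ k g x (fun h v => c • G h v) = c • psiAux N Δ₁ Δ₂ ρ k g x G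
  | 0, g, x, G, c => rfl
  | k+1, g, x, G, c => by
    rw [psiAux_succ, psiAux_succ, Finset.smul_sum]
    refine Finset.sum_congr rfl fun i _ => ?_
    exact psiAux_smul N Δ₁ Δ₂ ρ k (Δ₂ g i * (x 0).2) (fun l => x l.succ)
      (fun h v => G h (Fin.cons (ρ (Δ₁ g i) (x 0).1) v)) c

private lemma psiAux_eq_lin (N : H → ℕ) (Δ₁ Δ₂ : H → ℕ → H)
    (hrep : ∀ g : H, (Coalgebra.comul (R := ℂ) g : H ⊗[ℂ] H) =
      ∑ i ∈ Finset.range (N g), Δ₁ g i ⊗ₜ[ℂ] Δ₂ g i)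
    (ρ : H →ₗ[ℂ] A →ₗ[ℂ] A) :
    ∀ (k : ℕ) (x : Fin k → A × H)
      (F : H →ₗ[ℂ] MultilinearMap ℂ (fun _ : Fin k => A) ℂ) (g : H),
      psiAux N Δ₁ Δ₂ ρ k g x (fun h v => F h v) = psiAuxLin ρ k x F g
  | 0, x, F, g => rfl
  | k+1, x, F, g => by
    rw [psiAux_succ]
    have hterm : ∀ i ∈ Finset.range (N g),
        psiAux N Δ₁ Δ₂ ρ k (Δ₂ g i * (x 0).2) (fun l => x l.succ)
          (fun h v => (fun (h : H) (v : Fin (k+1) → A) => F h v) h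
            (Fin.cons (ρ (Δ₁ g i) (x 0).1) v))
        = psiAuxLin ρ k (fun l => x l.succ)
            (curryAtL (ρ (Δ₁ g i) (x 0).1) ∘ₗ F) (Δ₂ g i * (x 0).2) := fun i _ =>
      psiAux_eq_lin N Δ₁ Δ₂ hrep ρ k (fun l => x l.succ)
        (curryAtL (ρ (Δ₁ g i) (x 0).1) ∘ₗ F) (Δ₂ g i * (x 0).2)
    rw [Finset.sum_congr rfl hterm]
    have hdef : psiAuxLin ρ (k+1) x F g
        = TensorProduct.lift (psiAuxB ρ (x 0).1 (x 0).2
            (psiAuxLin ρ k (fun l => x l.succ)) F) (Coalgebra.comul (R := ℂ) g) := rfl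
    rw [hdef, hrep g, map_sum]
    refine Finset.sum_congr rfl fun i _ => ?_
    rw [TensorProduct.lift.tmul]
    rfl

private lemma counit_rep (N : H → ℕ) (Δ₁ Δ₂ : H → ℕ → H)
    (hrep : ∀ g : H, (Coalgebra.comul (R := ℂ) g : H ⊗[ℂ] H) =
      ∑ i ∈ Finset.range (N g), Δ₁ g i ⊗ₜ[ℂ] Δ₂ g i) (g : H) :
    ∑ i ∈ Finset.range (N g), (Coalgebra.counit (R := ℂ) (Δ₁ g i)) • Δ₂ g i = g := by
  have h := Coalgebra.rTensor_counit_comul (R := ℂ) g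
  rw [hrep g, map_sum] at h
  simp only [LinearMap.rTensor_tmul] at h
  have h2 := congrArg (TensorProduct.lid ℂ H) h
  simpa [map_sum, TensorProduct.lid_tmul] using h2

end Aux2
section Aux3

variable {H A : Type} [Ring H] [HopfAlgebra ℂ H] [Ring A] [Algebra ℂ A]

private lemma key_zero (N : H → ℕ) (Δ₁ Δ₂ : H → ℕ → H)
    (hrep : ∀ g : H, (Coalgebra.comul (R := ℂ) g : H ⊗[ℂ] H) =
      ∑ i ∈ Finset.range (N g), Δ₁ g i ⊗ₜ[ℂ] Δ₂ g i)
    (ρ : H →ₗ[ℂ] A →ₗ[ℂ] A)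
    (hact_one : ∀ h : H, ρ h 1 = (Coalgebra.counit (R := ℂ) h) • (1 : A))
    (k : ℕ) (g : H) (x : Fin k → A × H)
    (F : H →ₗ[ℂ] MultilinearMap ℂ (fun _ : Fin (k+1) => A) ℂ) :
    psiAux N Δ₁ Δ₂ ρ k g x (fun h v => F h (Fin.cons (1 : A) v))
      = psiAux N Δ₁ Δ₂ ρ (k+1) g (Fin.cons ((1:A),(1:H)) x) (fun h v => F h v) := by
  rw [psiAux_succ]
  have hstep : ∀ i ∈ Finset.range (N g),
      psiAux N Δ₁ Δ₂ ρ k (Δ₂ g i * (Fin.cons (α := fun _ => A × H) ((1:A),(1:H)) x 0).2)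
        (fun l => Fin.cons (α := fun _ => A × H) ((1:A),(1:H)) x l.succ)
        (fun h v => (fun (h : H) (v : Fin (k+1) → A) => F h v) h
          (Fin.cons (ρ (Δ₁ g i) (Fin.cons (α := fun _ => A × H) ((1:A),(1:H)) x 0).1) v))
      = (Coalgebra.counit (R := ℂ) (Δ₁ g i)) •
          psiAuxLin ρ k x (curryAtL (1:A) ∘ₗ F) (Δ₂ g i) := by
    intro i _
    have e1 : (fun l : Fin k => Fin.cons (α := fun _ => A × H) ((1:A),(1:H)) x l.succ) = x := by
      funext l; simp
    simp only [Fin.cons_zero, mul_one, e1]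
    have e2 : ∀ (a : H) (v : Fin k → A),
        F a (Fin.cons (ρ (Δ₁ g i) (1:A)) v)
        = (Coalgebra.counit (R := ℂ) (Δ₁ g i)) • F a (Fin.cons (1:A) v) := by
      intro a v
      rw [hact_one]
      calc F a (Fin.cons ((Coalgebra.counit (R := ℂ) (Δ₁ g i)) • (1:A)) v)
          = ((F a).curryLeft ((Coalgebra.counit (R := ℂ) (Δ₁ g i)) • (1:A))) v := rfl
        _ = ((Coalgebra.counit (R := ℂ) (Δ₁ g i)) • (F a).curryLeft (1:A)) v := by
            rw [map_smul]
        _ = (Coalgebra.counit (R := ℂ) (Δ₁ g i)) • F a (Fin.cons (1:A) v) := rfl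
    rw [psiAux_congr N Δ₁ Δ₂ ρ (Δ₂ g i) x (fun a v => e2 a v), psiAux_smul]
    exact congrArg (fun z => (Coalgebra.counit (R := ℂ) (Δ₁ g i)) • z)
      (psiAux_eq_lin N Δ₁ Δ₂ hrep ρ k x (curryAtL (1:A) ∘ₗ F) (Δ₂ g i))
  rw [Finset.sum_congr rfl hstep]
  have hsum : ∑ i ∈ Finset.range (N g),
      (Coalgebra.counit (R := ℂ) (Δ₁ g i)) •
        psiAuxLin ρ k x (curryAtL (1:A) ∘ₗ F) (Δ₂ g i)
      = psiAuxLin ρ k x (curryAtL (1:A) ∘ₗ F) g := by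
    calc ∑ i ∈ Finset.range (N g), (Coalgebra.counit (R := ℂ) (Δ₁ g i)) •
          psiAuxLin ρ k x (curryAtL (1:A) ∘ₗ F) (Δ₂ g i)
        = ∑ i ∈ Finset.range (N g),
            psiAuxLin ρ k x (curryAtL (1:A) ∘ₗ F)
              ((Coalgebra.counit (R := ℂ) (Δ₁ g i)) • Δ₂ g i) :=
          Finset.sum_congr rfl fun i _ =>
            (map_smul (psiAuxLin ρ k x (curryAtL (1:A) ∘ₗ F)) _ _).symm
      _ = psiAuxLin ρ k x (curryAtL (1:A) ∘ₗ F)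
            (∑ i ∈ Finset.range (N g), (Coalgebra.counit (R := ℂ) (Δ₁ g i)) • Δ₂ g i) :=
          (map_sum (psiAuxLin ρ k x (curryAtL (1:A) ∘ₗ F)) _ _).symm
      _ = psiAuxLin ρ k x (curryAtL (1:A) ∘ₗ F) g := by
          rw [counit_rep N Δ₁ Δ₂ hrep g]
  rw [hsum]
  exact psiAux_eq_lin N Δ₁ Δ₂ hrep ρ k x (curryAtL (1:A) ∘ₗ F) g

private lemma key_lemma (N : H → ℕ) (Δ₁ Δ₂ : H → ℕ → H)
    (hrep : ∀ g : H, (Coalgebra.comul (R := ℂ) g : H ⊗[ℂ] H) =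
      ∑ i ∈ Finset.range (N g), Δ₁ g i ⊗ₜ[ℂ] Δ₂ g i)
    (ρ : H →ₗ[ℂ] A →ₗ[ℂ] A)
    (hact_one : ∀ h : H, ρ h 1 = (Coalgebra.counit (R := ℂ) h) • (1 : A)) :
    ∀ (k : ℕ) (j : Fin (k+1)) (g : H) (x : Fin k → A × H)
      (F : H →ₗ[ℂ] MultilinearMap ℂ (fun _ : Fin (k+1) => A) ℂ),
      psiAux N Δ₁ Δ₂ ρ k g x (fun h v => F h (Fin.insertNth j (1:A) v))
        = psiAux N Δ₁ Δ₂ ρ (k+1) g (Fin.insertNth j ((1:A),(1:H)) x)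
            (fun h v => F h v) := by
  intro k
  induction k with
  | zero =>
    intro j g x F
    have hj : j = 0 := Fin.fin_one_eq_zero j
    subst hj
    simp only [Fin.insertNth_zero']
    exact key_zero N Δ₁ Δ₂ hrep ρ hact_one 0 g x F
  | succ k ih =>
    intro j g x F
    induction j using Fin.cases with
    | zero =>
      simp only [Fin.insertNth_zero']
      exact key_zero N Δ₁ Δ₂ hrep ρ hact_one (k+1) g x F
    | succ j' =>
      rw [insertNth_succ_eq j' ((1:A),(1:H)) x, psiAux_succ, psiAux_succ]
      refine Finset.sum_congr rfl fun i _ => ?_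
      simp only [Fin.cons_zero, Fin.cons_succ]
      refine (psiAux_congr N Δ₁ Δ₂ ρ _ _ (fun a v => ?_)).trans
        (ih j' (Δ₂ g i * (x 0).2) (fun l => x l.succ)
          (curryAtL (ρ (Δ₁ g i) (x 0).1) ∘ₗ F))
      show F a (Fin.insertNth j'.succ (1:A) (Fin.cons (ρ (Δ₁ g i) (x 0).1) v)) = _
      rw [insertNth_succ_eq j' (1:A) (Fin.cons (ρ (Δ₁ g i) (x 0).1) v)]
      simp only [Fin.cons_zero, Fin.tail_cons]
      rfl

end Aux3
/-- `Ψ` commutes with the degeneracies: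
`Ψ(sʲφ)(x⁰,…,xⁿ⁻¹) = Ψφ(x⁰,…,xʲ, 1⊗1, xʲ⁺¹,…,xⁿ⁻¹)` on elementary tensors,
where `sʲφ(h, a⁰,…,aⁿ⁻¹) = φ(h, a⁰,…,aʲ, 1, aʲ⁺¹,…,aⁿ⁻¹)` for `0 ≤ j ≤ n−1`
(here `n = m+1`). -/
theorem statement11 {m : ℕ}
    (N : H → ℕ) (Δ₁ Δ₂ : H → ℕ → H)
    (hrep : ∀ g : H, (Coalgebra.comul (R := ℂ) g : H ⊗[ℂ] H) =
      ∑ i ∈ Finset.range (N g), Δ₁ g i ⊗ₜ[ℂ] Δ₂ g i)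
    (ρ : H →ₗ[ℂ] A →ₗ[ℂ] A)
    (hρ_one : ρ 1 = LinearMap.id)
    (hρ_mul : ∀ g h : H, ρ (g * h) = ρ g ∘ₗ ρ h)
    (hact_mul : ∀ (h : H) (a b : A),
      ρ h (a * b) = ∑ i ∈ Finset.range (N h), ρ (Δ₁ h i) a * ρ (Δ₂ h i) b)
    (hact_one : ∀ h : H, ρ h 1 = (Coalgebra.counit (R := ℂ) h) • (1 : A))
    (φ : H →ₗ[ℂ] MultilinearMap ℂ (fun _ : Fin (m+2) => A) ℂ) :
    ∀ (j : Fin (m+1)) (x : Fin (m+1) → A × H),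
      psiV N Δ₁ Δ₂ ρ (fun h a => φ h (Fin.insertNth j.succ (1 : A) a)) x
      = psiV N Δ₁ Δ₂ ρ (fun h a => φ h a)
          (Fin.insertNth j.succ ((1 : A), (1 : H)) x) := by
  intro j x
  have hL : psiV N Δ₁ Δ₂ ρ (fun h a => φ h (Fin.insertNth j.succ (1 : A) a)) x
      = psiAux N Δ₁ Δ₂ ρ m ((x 0).2) (fun l => x l.succ)
          (fun h v => φ h (Fin.insertNth j.succ (1:A) (Fin.cons (x 0).1 v))) := rfl
  have hR : psiV N Δ₁ Δ₂ ρ (fun h a => φ h a)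
        (Fin.insertNth j.succ ((1:A),(1:H)) x)
      = psiAux N Δ₁ Δ₂ ρ (m+1) ((Fin.insertNth (α := fun _ => A × H) j.succ ((1:A),(1:H)) x 0).2)
          (fun l => Fin.insertNth (α := fun _ => A × H) j.succ ((1:A),(1:H)) x l.succ)
          (fun h v => φ h (Fin.cons ((Fin.insertNth (α := fun _ => A × H) j.succ ((1:A),(1:H)) x 0).1) v)) := rfl
  rw [hL, hR, insertNth_succ_eq j ((1:A),(1:H)) x]
  simp only [Fin.cons_zero, Fin.cons_succ]
  refine (psiAux_congr N Δ₁ Δ₂ ρ _ _ (fun a v => ?_)).trans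
    (key_lemma N Δ₁ Δ₂ hrep ρ hact_one m j ((x 0).2) (fun l => x l.succ)
      (curryAtL ((x 0).1) ∘ₗ φ))
  show φ a (Fin.insertNth j.succ (1:A) (Fin.cons (x 0).1 v)) = _
  rw [insertNth_succ_eq j (1:A) (Fin.cons (x 0).1 v)]
  simp only [Fin.cons_zero, Fin.tail_cons]
  rfl

end
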